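/- Let A : D(A) ⊆ H → H be a selfadjoint operator on a complex Hilbert space H, and let C : H → H be an antiunitary operator (conjugate-linear, bijective, norm-preserving) such that C maps D(A) onto D(A) and C A C⁻¹ = -A on D(A). Then the spectrum of A is symmetric about 0: σ(A) = -σ(A). -/
import Mathlib


/-- The spectrum of an unbounded operator `A` on a Hilbert space: `z` belongs to the spectrum
iff `A - z` is not a bijection from the domain onto `H`.  (For a selfadjoint operator the
inverse of a bijective `A - z` is automatically bounded, so this is the usual spectrum.) -/
def pmapSpectrum {H : Type*} [NormedAddCommGroup H] [InnerProductSpace ℂ H]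
    (A : H →ₗ.[ℂ] H) : Set ℂ :=
  {z | ¬ Function.Bijective (fun x : A.domain => A x - z • (x : H))}


open scoped ComplexConjugate

local notation "⟪" x ", " y "⟫" => @inner ℂ _ _ x y

section Aux

variable {H : Type*} [NormedAddCommGroup H] [InnerProductSpace ℂ H]

lemma pmap_congr_aux {S T : H →ₗ.[ℂ] H} (h : S = T) {x : H} (hx : x ∈ S.domain) :
    ∃ hx' : x ∈ T.domain, S ⟨x, hx⟩ = T ⟨x, hx'⟩ := by
  subst h; exact ⟨hx, rfl⟩

variable [CompleteSpace H]

/-- Selfadjointness gives symmetry. -/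
lemma sa_symm (A : H →ₗ.[ℂ] H) (hdense : Dense (A.domain : Set H)) (hsa : A.adjoint = A)
    (x y : A.domain) : ⟪A x, (y : H)⟫ = ⟪(x : H), A y⟫ := by
  obtain ⟨hx', he⟩ := pmap_congr_aux hsa.symm x.2
  have := A.adjoint_isFormalAdjoint hdense ⟨(x : H), hx'⟩ y
  simpa [← he] using this

/-- Representation: if `⟪w, ·⟫ = ⟪x, A ·⟫` on the domain, then `x ∈ D(A)` and `A x = w`. -/
lemma sa_repr (A : H →ₗ.[ℂ] H) (hdense : Dense (A.domain : Set H)) (hsa : A.adjoint = A)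
    (x w : H) (h : ∀ y : A.domain, ⟪w, (y : H)⟫ = ⟪x, A y⟫) :
    ∃ hx : x ∈ A.domain, A ⟨x, hx⟩ = w := by
  have hx' : x ∈ A.adjoint.domain :=
    A.mem_adjoint_domain_of_exists x ⟨w, fun v => h v⟩
  have hA : A.adjoint ⟨x, hx'⟩ = w :=
    LinearPMap.adjoint_apply_eq hdense ⟨x, hx'⟩ fun v => h v
  obtain ⟨hx, he⟩ := pmap_congr_aux hsa hx'
  exact ⟨hx, he ▸ hA⟩

/-- If `A - z` is bijective then so is `A - conj z`, for selfadjoint `A`. -/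
lemma conj_bij (A : H →ₗ.[ℂ] H) (hdense : Dense (A.domain : Set H)) (hsa : A.adjoint = A)
    (z : ℂ) (hbij : Function.Bijective (fun x : A.domain => A x - z • (x : H))) :
    Function.Bijective (fun x : A.domain => A x - (conj z) • (x : H)) := by
  set L : A.domain →ₗ[ℂ] H := A.toFun - z • A.domain.subtype with hLdef
  have hL : ∀ x : A.domain, L x = A x - z • (x : H) := fun x => rfl
  have hbij' : Function.Bijective L := hbij
  set L' : A.domain →ₗ[ℂ] H := A.toFun - (conj z) • A.domain.subtype with hL'def
  have hL' : ∀ x : A.domain, L' x = A x - (conj z) • (x : H) := fun x => rfl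
  suffices hb : Function.Bijective L' by exact hb
  constructor
  · -- injectivity
    rw [injective_iff_map_eq_zero]
    intro x hx
    have hx0 : A x = (conj z) • (x : H) := by
      have h0 : A x - (conj z) • (x : H) = 0 := by rw [← hL' x, hx]
      exact sub_eq_zero.mp h0
    have hzero : ∀ h : H, ⟪(x : H), h⟫ = 0 := by
      intro h
      obtain ⟨y, hy⟩ := hbij.2 h
      rw [← hy]
      calc ⟪(x : H), A y - z • (y : H)⟫
          = ⟪(x : H), A y⟫ - z * ⟪(x : H), (y : H)⟫ := by
            rw [inner_sub_right, inner_smul_right]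
        _ = ⟪A x, (y : H)⟫ - ⟪(conj z) • (x : H), (y : H)⟫ := by
            rw [sa_symm A hdense hsa, inner_smul_left, Complex.conj_conj]
        _ = ⟪A x - (conj z) • (x : H), (y : H)⟫ := by rw [inner_sub_left]
        _ = 0 := by rw [hx0]; simp
    have : (x : H) = 0 := ext_inner_right ℂ (by simpa using hzero)
    exact Subtype.ext this
  · -- surjectivity
    -- the inverse of L is continuous by the closed graph theorem
    set e := LinearEquiv.ofBijective L hbij' with hedef
    set g : H →ₗ[ℂ] H := A.domain.subtype ∘ₗ e.symm.toLinearMap with hgdef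
    have hge : ∀ u : H, g u = ((e.symm u : A.domain) : H) := fun u => rfl
    have hgraph : (g.graph : Set (H × H)) =
        ⋂ y : A.domain, {p : H × H | ⟪p.1 + z • p.2, (y : H)⟫ = ⟪p.2, A y⟫} := by
      ext p
      simp only [SetLike.mem_coe, LinearMap.mem_graph_iff, Set.mem_iInter, Set.mem_setOf_eq]
      constructor
      · intro hp y
        set d := e.symm p.1 with hddef
        have hd : A d - z • (d : H) = p.1 := by
          have : L d = p.1 := e.apply_symm_apply p.1
          rwa [hL] at this
        have hdv : (d : H) = p.2 := by rw [hp, hge]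
        have h1 : p.1 + z • p.2 = A d := by rw [← hd, ← hdv]; abel
        rw [h1, ← hdv]
        exact sa_symm A hdense hsa d y
      · intro hp
        obtain ⟨hv, hAv⟩ := sa_repr A hdense hsa p.2 (p.1 + z • p.2) (fun y => by
          rw [hp])
        have hLv : L ⟨p.2, hv⟩ = p.1 := by
          rw [hL]; simp only [hAv]; abel
        have : e.symm p.1 = ⟨p.2, hv⟩ := by
          apply e.injective; rw [e.apply_symm_apply]; exact hLv.symm
        rw [hge, this]
    have hgcont : Continuous g := by
      apply g.continuous_of_isClosed_graph
      rw [hgraph]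
      exact isClosed_iInter fun y => isClosed_eq
        (Continuous.inner (continuous_fst.add (continuous_snd.const_smul z)) continuous_const)
        (Continuous.inner continuous_snd continuous_const)
    intro w
    set gL : H →L[ℂ] H := ⟨g, hgcont⟩ with hgL
    set x : H := (InnerProductSpace.toDual ℂ H).symm ((innerSL ℂ w).comp gL) with hxdef
    have hx : ∀ h : H, ⟪x, h⟫ = ⟪w, g h⟫ := fun h => by
      rw [hxdef, InnerProductSpace.toDual_symm_apply]; rfl
    have hkey : ∀ y : A.domain, ⟪w + (conj z) • x, (y : H)⟫ = ⟪x, A y⟫ := by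
      intro y
      have h1 : ⟪x, L y⟫ = ⟪w, (y : H)⟫ := by
        have h2 : g (L y) = (y : H) := by rw [hge]; exact congrArg _ (e.symm_apply_apply y)
        rw [hx, h2]
      rw [hL, inner_sub_right, inner_smul_right] at h1
      rw [inner_add_left, inner_smul_left]
      simp only [RingHomCompTriple.comp_apply, Complex.conj_conj, RingHom.id_apply] at *
      linear_combination -h1
    obtain ⟨hx', hAx⟩ := sa_repr A hdense hsa x (w + (conj z) • x) hkey
    refine ⟨⟨x, hx'⟩, ?_⟩
    rw [hL', hAx]; abel

end Aux


/-- If `A` is selfadjoint and `C` is an antiunitary with `C(D(A)) = D(A)` and `CAC⁻¹ = -A`,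
then the spectrum of `A` is symmetric about `0`. -/
theorem spectrum_symm_of_antiunitary {H : Type*} [NormedAddCommGroup H]
    [InnerProductSpace ℂ H] [CompleteSpace H]
    (A : H →ₗ.[ℂ] H) (hdense : Dense (A.domain : Set H))
    (hsa : A.adjoint = A)
    (C : H ≃ₗᵢ⋆[ℂ] H)
    (hC : ∀ x : H, x ∈ A.domain ↔ C x ∈ A.domain)
    (hanti : ∀ x : A.domain, A ⟨C (x : H), (hC (x : H)).mp x.2⟩ = -C (A x)) :
    ∀ z : ℂ, z ∈ pmapSpectrum A ↔ -z ∈ pmapSpectrum A := by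
  have hconj : ∀ z : ℂ,
      Function.Bijective (fun x : A.domain => A x - z • (x : H)) ↔
      Function.Bijective (fun x : A.domain => A x - (conj z) • (x : H)) := by
    intro z
    constructor
    · exact conj_bij A hdense hsa z
    · intro h
      have := conj_bij A hdense hsa (conj z) h
      simpa using this
  -- the antiunitary part: Bijective (A - conj z) ↔ Bijective (A - (-z))
  have hCiff : ∀ z : ℂ,
      Function.Bijective (fun x : A.domain => A x - (conj z) • (x : H)) ↔
      Function.Bijective (fun x : A.domain => A x - (-z) • (x : H)) := by
    intro z
    set cD : A.domain → A.domain := fun x => ⟨C (x : H), (hC (x : H)).mp x.2⟩ with hcD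
    have hcDbij : Function.Bijective cD := by
      refine ⟨fun a b hab => ?_, fun b => ?_⟩
      · have : C (a : H) = C (b : H) := congrArg Subtype.val hab
        exact Subtype.ext (C.injective this)
      · have hb : C.symm (b : H) ∈ A.domain := by
          rw [hC (C.symm (b : H)), C.apply_symm_apply]; exact b.2
        refine ⟨⟨C.symm (b : H), hb⟩, ?_⟩
        apply Subtype.ext
        simp [hcD]
    have hnegC : Function.Bijective (fun v : H => -C v) :=
      neg_involutive.bijective.comp C.bijective
    have hcomp : (fun x : A.domain => A x - (-z) • (x : H)) ∘ cD
        = (fun v : H => -C v) ∘ (fun x : A.domain => A x - (conj z) • (x : H)) := by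
      funext x
      simp only [Function.comp_apply, hcD]
      rw [hanti x]
      simp only [map_sub, map_smulₛₗ, RingHomCompTriple.comp_apply, Complex.conj_conj,
        starRingEnd_apply, star_star]
      module
    constructor
    · intro h
      have h1 : Function.Bijective ((fun v : H => -C v)
          ∘ (fun x : A.domain => A x - (conj z) • (x : H))) := hnegC.comp h
      rw [← hcomp] at h1
      exact (Function.Bijective.of_comp_iff _ hcDbij).mp h1
    · intro h
      have h1 : Function.Bijective ((fun x : A.domain => A x - (-z) • (x : H)) ∘ cD) :=
        h.comp hcDbij
      rw [hcomp] at h1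
      exact (Function.Bijective.of_comp_iff' hnegC _).mp h1
  intro z
  simp only [pmapSpectrum, Set.mem_setOf_eq]
  rw [not_iff_not]
  exact (hconj z).trans (hCiff z)
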